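/- arXiv:2401.10018 — 2 statements merged into one kernel-verified Lean document; each statement's English description precedes it below -/
import Mathlib

section
/- Let σ, N be natural numbers and let w ∈ {0,1}^{N} be a binary sequence with at most σ sign changes, i.e. the number of indices l ∈ {2,…,N} with w_l ≠ w_{l-1} is at most σ. If v ∈ {0,1}^{N} is another binary sequence with at most σ sign changes and v agrees with w at a set of indices, then the number of maximal blocks of consecutive indices on which v and w differ, each such block lying strictly between two agreement indices, is at most σ. -/
/-- If binary sequences `w` and `v` (indexed `1,…,N`) each have at most `σ`
sign changes, and they agree at the endpoints of each of `m` maximal difference blocks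
(blocks lying strictly between agreement indices, pairwise separated, with nonempty
interior on which `v` and `w` differ), then `m ≤ σ`. -/
theorem stmt0 (σ N : ℕ) (w v : ℕ → ℤ)
    (hw01 : ∀ l ∈ Finset.Icc 1 N, w l = 0 ∨ w l = 1)
    (hv01 : ∀ l ∈ Finset.Icc 1 N, v l = 0 ∨ v l = 1)
    (hw : ((Finset.Icc 2 N).filter (fun l => w l ≠ w (l - 1))).card ≤ σ)
    (hv : ((Finset.Icc 2 N).filter (fun l => v l ≠ v (l - 1))).card ≤ σ)
    (m : ℕ) (a b : ℕ → ℕ)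
    (hrange : ∀ i < m, 1 ≤ a i ∧ a i < b i ∧ b i ≤ N)
    (hsep : ∀ i, i + 1 < m → b i ≤ a (i + 1))
    (hagree : ∀ i < m, v (a i) = w (a i) ∧ v (b i) = w (b i))
    (hdiff : ∀ i < m, ∀ l, a i < l → l < b i → v l ≠ w l)
    (hnonempty : ∀ i < m, a i + 1 < b i) :
    m ≤ σ := by
  classical
  set S : Finset ℕ :=
    (Finset.Icc 2 N).filter (fun l => v l ≠ v (l - 1)) ∪
    (Finset.Icc 2 N).filter (fun l => w l ≠ w (l - 1)) with hS
  have hScard : S.card ≤ σ + σ :=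
    le_trans (Finset.card_union_le _ _) (Nat.add_le_add hv hw)
  set g : ℕ → ℕ := fun k => if k % 2 = 0 then a (k / 2) + 1 else b (k / 2) with hg
  -- g maps into S
  have hmem : ∀ k < 2 * m, g k ∈ S := by
    intro k hk
    rcases Nat.even_or_odd k with ⟨i, hi⟩ | ⟨i, hi⟩
    · have him : i < m := by omega
      have hgk : g k = a i + 1 := by
        have hki : k / 2 = i := by omega
        simp only [hg, hki]
        rw [if_pos (by omega)]
      obtain ⟨ha1, hab, hbN⟩ := hrange i him
      have hne : v (a i + 1) ≠ w (a i + 1) :=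
        hdiff i him _ (by omega) (hnonempty i him)
      have hag := (hagree i him).1
      rw [hgk, hS]
      simp only [Finset.mem_union, Finset.mem_filter, Finset.mem_Icc]
      have hsub : a i + 1 - 1 = a i := by omega
      by_contra hcon
      push_neg at hcon
      obtain ⟨h1, h2⟩ := hcon
      have hv' := h1 ⟨by omega, by omega⟩
      have hw' := h2 ⟨by omega, by omega⟩
      rw [hsub] at hv' hw'
      exact hne (by rw [hv', hw', hag])
    · have him : i < m := by omega
      have hgk : g k = b i := by
        have hki : k / 2 = i := by omega
        simp only [hg, hki]
        rw [if_neg (by omega)]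
      obtain ⟨ha1, hab, hbN⟩ := hrange i him
      have hne2 := hnonempty i him
      have hne : v (b i - 1) ≠ w (b i - 1) :=
        hdiff i him _ (by omega) (by omega)
      have hag := (hagree i him).2
      rw [hgk, hS]
      simp only [Finset.mem_union, Finset.mem_filter, Finset.mem_Icc]
      by_contra hcon
      push_neg at hcon
      obtain ⟨h1, h2⟩ := hcon
      have hv' := h1 ⟨by omega, by omega⟩
      have hw' := h2 ⟨by omega, by omega⟩
      exact hne (by rw [← hv', ← hw']; exact hag)
  -- g is strictly increasing on [0, 2m)
  have gstep : ∀ k, k + 1 < 2 * m → g k < g (k + 1) := by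
    intro k hk
    rcases Nat.even_or_odd k with ⟨i, hi⟩ | ⟨i, hi⟩
    · have him : i < m := by omega
      have h1 : g k = a i + 1 := by
        have hki : k / 2 = i := by omega
        simp only [hg, hki]; rw [if_pos (by omega)]
      have h2 : g (k + 1) = b i := by
        have hki : (k + 1) / 2 = i := by omega
        simp only [hg, hki]; rw [if_neg (by omega)]
      rw [h1, h2]
      exact hnonempty i him
    · have him : i + 1 < m := by omega
      have h1 : g k = b i := by
        have hki : k / 2 = i := by omega
        simp only [hg, hki]; rw [if_neg (by omega)]
      have h2 : g (k + 1) = a (i + 1) + 1 := by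
        have hki : (k + 1) / 2 = i + 1 := by omega
        simp only [hg, hki]; rw [if_pos (by omega)]
      rw [h1, h2]
      have := hsep i him
      omega
  have gmono : ∀ j k, j < k → k < 2 * m → g j < g k := by
    intro j k
    induction k with
    | zero => omega
    | succ n ih =>
      intro hjk hk
      rcases Nat.lt_succ_iff_lt_or_eq.mp hjk with h | h
      · exact lt_trans (ih h (by omega)) (gstep n hk)
      · subst h; exact gstep j hk
  have hinj : Set.InjOn g (Finset.range (2 * m)) := by
    intro x hx y hy hxy
    simp only [Finset.coe_range, Set.mem_Iio] at hx hy
    by_contra hne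
    rcases Nat.lt_or_ge x y with h | h
    · exact absurd hxy (ne_of_lt (gmono x y h hy))
    · have : y < x := by omega
      exact absurd hxy.symm (ne_of_lt (gmono y x this hx))
  have hsub : (Finset.range (2 * m)).image g ⊆ S := by
    intro x hx
    simp only [Finset.mem_image, Finset.mem_range] at hx
    obtain ⟨k, hk, rfl⟩ := hx
    exact hmem k hk
  have h2m : 2 * m ≤ S.card := by
    calc 2 * m = ((Finset.range (2 * m)).image g).card := by
          rw [Finset.card_image_of_injOn hinj, Finset.card_range]
      _ ≤ S.card := Finset.card_le_card hsub
  omega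
end

section
/- Let s > 0 and let S ⊆ [0,T] be a finite set. Suppose u is a binary control on [0,T] with ordered switching points t_1 < t_2 < … < t_k satisfying the dwell-time condition t_{i} − t_{i−1} ≥ s, and let j be an index with t_j ∉ S. Define S_j = { t_ℓ : t_ℓ − t_j = s(ℓ − j) } (the maximal block of switching points spaced exactly s apart containing t_j). Then for sufficiently small δ > 0, shifting all points of S_j simultaneously by +δ or by −δ (leaving the other switching points unchanged) again yields an ordered family of switching points satisfying the dwell-time condition. -/
/-- let `t₁ < … < t_k` satisfy the dwell-time condition
`t_i − t_{i−1} ≥ s`, let `S` be a finite set with `t_j ∉ S`, and let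
`B = {ℓ : t_ℓ − t_j = s(ℓ − j)}` be the maximal block of switching points spaced
exactly `s` apart containing `t_j`. Then for all sufficiently small `δ > 0`, shifting
all points of the block simultaneously by `+δ` or by `−δ` (leaving the others
unchanged) again yields an ordered family satisfying the dwell-time condition. -/
theorem stmt17 (s T : ℝ) (hs : 0 < s) (hT : 0 < T) (k : ℕ) (t : ℕ → ℝ)
    (hord : ∀ i, 1 ≤ i → i < k → t i < t (i + 1))
    (hdwell : ∀ i, 2 ≤ i → i ≤ k → t i - t (i - 1) ≥ s)
    (hrange : ∀ i, 1 ≤ i → i ≤ k → t i ∈ Set.Icc 0 T)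
    (S : Finset ℝ) (j : ℕ) (hj : 1 ≤ j ∧ j ≤ k) (hjS : t j ∉ S) :
    ∃ δ₀ > 0, ∀ δ : ℝ, 0 < δ → δ ≤ δ₀ →
      (∀ i, 2 ≤ i → i ≤ k →
        (if t i - t j = s * ((i : ℝ) - (j : ℝ)) then t i + δ else t i) -
        (if t (i - 1) - t j = s * (((i : ℝ) - 1) - (j : ℝ)) then t (i - 1) + δ
          else t (i - 1)) ≥ s) ∧
      (∀ i, 2 ≤ i → i ≤ k →
        (if t i - t j = s * ((i : ℝ) - (j : ℝ)) then t i - δ else t i) -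
        (if t (i - 1) - t j = s * (((i : ℝ) - 1) - (j : ℝ)) then t (i - 1) - δ
          else t (i - 1)) ≥ s) := by
  classical
  set P : ℕ → Prop := fun i => t i - t j = s * ((i : ℝ) - (j : ℝ)) with hP
  set Q : ℕ → Prop := fun i => t (i - 1) - t j = s * (((i : ℝ) - 1) - (j : ℝ)) with hQ
  -- strictness lemma
  have hstrict : ∀ i, 2 ≤ i → i ≤ k → ¬(P i ↔ Q i) → t i - t (i - 1) > s := by
    intro i h2 hk hne
    have hge := hdwell i h2 hk
    rcases lt_or_eq_of_le hge with h | h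
    · exact h
    · exfalso
      apply hne
      have heq : t i = t (i - 1) + s := by linarith
      constructor
      · intro hp
        simp only [hQ]
        simp only [hP] at hp
        rw [heq] at hp
        linarith [hp]
      · intro hq
        simp only [hP]
        simp only [hQ] at hq
        rw [heq]
        linarith [hq]
  set F : Finset ℕ := (Finset.Icc 2 k).filter (fun i => ¬(P i ↔ Q i)) with hF
  set G : Finset ℝ := insert 1 (F.image (fun i => t i - t (i - 1) - s)) with hG
  have hGne : G.Nonempty := ⟨1, Finset.mem_insert_self _ _⟩
  refine ⟨G.min' hGne, ?_, ?_⟩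
  · rw [gt_iff_lt, Finset.lt_min'_iff]
    intro y hy
    rcases Finset.mem_insert.mp hy with h | h
    · simp [h]
    · rcases Finset.mem_image.mp h with ⟨i, hi, rfl⟩
      rcases Finset.mem_filter.mp hi with ⟨hi', hne⟩
      rcases Finset.mem_Icc.mp hi' with ⟨h2, hk⟩
      have := hstrict i h2 hk hne
      linarith
  · intro δ hδ hδ₀
    have hmem : ∀ i, 2 ≤ i → i ≤ k → ¬(P i ↔ Q i) → δ ≤ t i - t (i - 1) - s := by
      intro i h2 hk hne
      refine le_trans hδ₀ (Finset.min'_le _ _ ?_)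
      exact Finset.mem_insert_of_mem (Finset.mem_image_of_mem _
        (Finset.mem_filter.mpr ⟨Finset.mem_Icc.mpr ⟨h2, hk⟩, hne⟩))
    constructor
    · intro i h2 hk
      have hge := hdwell i h2 hk
      by_cases hp : P i <;> by_cases hq : Q i <;>
        simp only [hP, hQ] at hp hq <;> simp [hp, hq]
      · linarith
      · linarith
      · have := hmem i h2 hk (by simp only [hP, hQ]; tauto)
        linarith
      · linarith
    · intro i h2 hk
      have hge := hdwell i h2 hk
      by_cases hp : P i <;> by_cases hq : Q i <;>
        simp only [hP, hQ] at hp hq <;> simp [hp, hq]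
      · linarith
      · have := hmem i h2 hk (by simp only [hP, hQ]; tauto)
        linarith
      · linarith
      · linarith
end
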